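/- arXiv:2202.02762 — 2 statements merged into one kernel-verified Lean document; each statement's English description precedes it below -/
import Mathlib

section
/- The map h : ℝ_{>0} × 𝔻 → P(n), h(t,ρ) = t²ρ/4, is an isometry from the warped product ℝ_{>0} ×_{t} (𝔻, g^f) (warping function l(t) = t, base metric the Euclidean metric on ℝ_{>0}) onto P(n) equipped with the extended monotone metric g^f. In particular the pull-back metric G = h*g^f satisfies G_{(t,ρ)}(∂_t, ∂_t) = 1 and G_{(t,ρ)}(V,W) = t² G_{(1,ρ)}(V,W) for vertical vectors V, W. -/
open Matrix
open scoped ComplexOrder BigOperators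

/-!
Diagonalize `ρ = U diag(d) U*`. Unitary invariance and the diagonal formula (polarized) express
`g^f_ρ(X, Y)` as `Σᵢⱼ c(dᵢ, dⱼ) Re(X'ᵢⱼ conj Y'ᵢⱼ)` in the eigenbasis of `ρ`. Since `c` is
homogeneous of degree `-1`, `g^f_{aρ} = a⁻¹ g^f_ρ`; since `c(d, d) = 1/d` (as `f 1 = 1`),
`g^f_ρ(ρ, X) = Re tr X`. With `dh(∂_t) = (t/2)ρ` and `dh(V) = (t²/4)V` this gives
`G(∂_t, ∂_t) = tr ρ = 1`, `G(∂_t, V) ∝ tr V = 0` and `G(V, W) = (t²/4) g^f_ρ(V, W)`.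
The map `h` is a bijection because the trace recovers `t²/4`.
-/

/-- The kernel `c(x, y) = 1 / (y f(x / y))` of the monotone metric `g^f`. -/
noncomputable def metricKernel (f : ℝ → ℝ) (x y : ℝ) : ℝ := 1 / (y * f (x / y))

lemma metricKernel_mul_mul (f : ℝ → ℝ) {a : ℝ} (ha : a ≠ 0) (x y : ℝ) :
    metricKernel f (a * x) (a * y) = a⁻¹ * metricKernel f x y := by
  rw [metricKernel, metricKernel, mul_div_mul_left _ _ ha, one_div, one_div, mul_assoc, mul_inv]

lemma metricKernel_self {f : ℝ → ℝ} (hf1 : f 1 = 1) {x : ℝ} (hx : x ≠ 0) :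
    metricKernel f x x = x⁻¹ := by
  simp [metricKernel, hx, hf1]

lemma two_mul_eq_polarization {M : Type*} [Add M] (B : M → M → ℝ)
    (hsymm : ∀ x y, B x y = B y x) (hadd : ∀ x y y', B x (y + y') = B x y + B x y') (x y : M) :
    2 * B x y = B (x + y) (x + y) - B x x - B y y := by
  rw [hadd, hsymm (x + y), hsymm (x + y), hadd, hadd, hsymm y x]
  ring

lemma sum_mul_normSq_add {ι : Type*} [Fintype ι] (c : ι → ι → ℝ) (X Y : Matrix ι ι ℂ) :
    ∑ i, ∑ j, c i j * Complex.normSq ((X + Y) i j)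
      = ∑ i, ∑ j, c i j * Complex.normSq (X i j) + ∑ i, ∑ j, c i j * Complex.normSq (Y i j)
        + 2 * ∑ i, ∑ j, c i j * (X i j * starRingEnd ℂ (Y i j)).re := by
  simp only [Matrix.add_apply, Finset.mul_sum, ← Finset.sum_add_distrib]
  exact Finset.sum_congr rfl fun i _ => Finset.sum_congr rfl fun j _ => by
    rw [Complex.normSq_add]
    ring

namespace Matrix.PosDef

variable {ι : Type*} [Fintype ι]

lemma exists_unitary_conj_eq_diagonal [DecidableEq ι] {ρ : Matrix ι ι ℂ} (hρ : ρ.PosDef) :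
    ∃ U ∈ unitaryGroup ι ℂ, ∃ d : ι → ℝ, (∀ i, 0 < d i) ∧
      star U * ρ * U = diagonal fun i => (d i : ℂ) := by
  set U := hρ.1.eigenvectorUnitary
  refine ⟨U, U.2, hρ.1.eigenvalues, hρ.eigenvalues_pos, ?_⟩
  have hU : star (U : Matrix ι ι ℂ) * U = 1 := mem_unitaryGroup_iff'.mp U.2
  have hspec := congrArg (fun M => star (U : Matrix ι ι ℂ) * M * U) hρ.1.spectral_theorem
  rw [Unitary.conjStarAlgAut_apply] at hspec
  rw [hspec]
  simp only [← mul_assoc]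
  rw [hU, one_mul, mul_assoc, hU, mul_one]
  rfl

lemma exists_eq_sq_div_four_smul [Nonempty ι] {A : Matrix ι ι ℂ} (hA : A.PosDef) :
    ∃ t : ℝ, 0 < t ∧ ∃ ρ : Matrix ι ι ℂ, ρ.PosDef ∧ ρ.trace = 1 ∧
      A = (t ^ 2 / 4 : ℂ) • ρ := by
  obtain ⟨hre, him⟩ := Complex.pos_iff.mp hA.trace_pos
  obtain ⟨r, hr, htr⟩ : ∃ r : ℝ, 0 < r ∧ A.trace = r :=
    ⟨A.trace.re, hre, Complex.ext rfl (by simp [← him])⟩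
  have hr' : (r : ℂ) ≠ 0 := by exact_mod_cast hr.ne'
  refine ⟨2 * √r, by positivity, (r⁻¹ : ℂ) • A, ?_, ?_, ?_⟩
  · exact_mod_cast hA.smul (inv_pos.mpr hr)
  · rw [trace_smul, htr, smul_eq_mul, inv_mul_cancel₀ hr']
  · have ht : ((2 * √r : ℝ) : ℂ) ^ 2 / 4 = r := by
      push_cast
      rw [mul_pow, ← Complex.ofReal_pow, Real.sq_sqrt hr.le]
      ring
    rw [ht, smul_smul, mul_inv_cancel₀ hr', one_smul]

end Matrix.PosDef

lemma eq_and_eq_of_sq_div_four_smul_eq {ι : Type*} [Fintype ι] {t s : ℝ} (ht : 0 < t)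
    (hs : 0 < s) {ρ τ : Matrix ι ι ℂ} (hρ : ρ.trace = 1) (hτ : τ.trace = 1)
    (h : (t ^ 2 / 4 : ℂ) • ρ = (s ^ 2 / 4 : ℂ) • τ) : t = s ∧ ρ = τ := by
  have htr := congrArg trace h
  rw [trace_smul, trace_smul, hρ, hτ, smul_eq_mul, smul_eq_mul, mul_one, mul_one] at htr
  have hts : t = s := by
    have : t ^ 2 = s ^ 2 := by exact_mod_cast (div_left_inj' four_ne_zero).mp htr
    nlinarith
  subst hts
  refine ⟨rfl, smul_right_injective _ ?_ h⟩
  have : (t : ℂ) ≠ 0 := by exact_mod_cast ht.ne'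
  simpa

variable {ι : Type*} [Fintype ι] [DecidableEq ι]

/-- The properties of the monotone metric `g^f` read off from its contour-integral formula;
`f` enters only through the diagonal formula. -/
structure IsMonotoneMetric (f : ℝ → ℝ)
    (g : Matrix ι ι ℂ → Matrix ι ι ℂ → Matrix ι ι ℂ → ℝ) : Prop where
  unitary_invariant : ∀ U ∈ unitaryGroup ι ℂ, ∀ ρ X Y,
    g (U * ρ * star U) (U * X * star U) (U * Y * star U) = g ρ X Y
  symm : ∀ ρ X Y, g ρ X Y = g ρ Y X
  add_right : ∀ ρ X Y Y', g ρ X (Y + Y') = g ρ X Y + g ρ X Y'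
  smul_right : ∀ ρ X Y (r : ℝ), g ρ X ((r : ℂ) • Y) = r * g ρ X Y
  diagonal_self : ∀ d : ι → ℝ, (∀ i, 0 < d i) → ∀ X : Matrix ι ι ℂ, X.IsHermitian →
    g (diagonal fun i => (d i : ℂ)) X X
      = ∑ i, ∑ j, metricKernel f (d i) (d j) * Complex.normSq (X i j)

namespace IsMonotoneMetric

variable {f : ℝ → ℝ} {g : Matrix ι ι ℂ → Matrix ι ι ℂ → Matrix ι ι ℂ → ℝ}

lemma smul_left (hg : IsMonotoneMetric f g) (ρ X Y : Matrix ι ι ℂ) (r : ℝ) :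
    g ρ ((r : ℂ) • X) Y = r * g ρ X Y := by
  rw [hg.symm, hg.smul_right, hg.symm]

lemma apply_diagonal (hg : IsMonotoneMetric f g) {d : ι → ℝ} (hd : ∀ i, 0 < d i)
    {X Y : Matrix ι ι ℂ} (hX : X.IsHermitian) (hY : Y.IsHermitian) :
    g (diagonal fun i => (d i : ℂ)) X Y
      = ∑ i, ∑ j, metricKernel f (d i) (d j) * (X i j * starRingEnd ℂ (Y i j)).re := by
  have h := two_mul_eq_polarization _ (hg.symm (diagonal fun i => (d i : ℂ)))
    (hg.add_right _) X Y
  rw [hg.diagonal_self d hd _ (hX.add hY), hg.diagonal_self d hd _ hX, hg.diagonal_self d hd _ hY,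
    sum_mul_normSq_add] at h
  linarith

lemma eq_sum_of_conj_eq_diagonal (hg : IsMonotoneMetric f g) {ρ U : Matrix ι ι ℂ}
    (hU : U ∈ unitaryGroup ι ℂ) {d : ι → ℝ} (hd : ∀ i, 0 < d i)
    (hρ : star U * ρ * U = diagonal fun i => (d i : ℂ))
    {X Y : Matrix ι ι ℂ} (hX : X.IsHermitian) (hY : Y.IsHermitian) :
    g ρ X Y = ∑ i, ∑ j, metricKernel f (d i) (d j) *
      ((star U * X * U) i j * starRingEnd ℂ ((star U * Y * U) i j)).re := by
  have h := hg.unitary_invariant (star U) (Unitary.star_mem hU) ρ X Y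
  rw [star_star, hρ] at h
  exact h ▸ hg.apply_diagonal hd (isHermitian_conjTranspose_mul_mul U hX)
    (isHermitian_conjTranspose_mul_mul U hY)

lemma real_smul_base (hg : IsMonotoneMetric f g) {a : ℝ} (ha : 0 < a) {ρ X Y : Matrix ι ι ℂ}
    (hρ : ρ.PosDef) (hX : X.IsHermitian) (hY : Y.IsHermitian) :
    g ((a : ℂ) • ρ) X Y = a⁻¹ * g ρ X Y := by
  obtain ⟨U, hU, d, hd, hUρ⟩ := hρ.exists_unitary_conj_eq_diagonal
  have hUaρ : star U * ((a : ℂ) • ρ) * U = diagonal fun i => ((a * d i : ℝ) : ℂ) := by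
    rw [Matrix.mul_smul, Matrix.smul_mul, hUρ, ← diagonal_smul]
    congr 1
    ext i
    simp
  rw [hg.eq_sum_of_conj_eq_diagonal hU hd hUρ hX hY,
    hg.eq_sum_of_conj_eq_diagonal hU (fun i => mul_pos ha (hd i)) hUaρ hX hY, Finset.mul_sum]
  simp only [metricKernel_mul_mul f ha.ne', Finset.mul_sum, mul_assoc]

lemma self_left (hg : IsMonotoneMetric f g) (hf1 : f 1 = 1) {ρ X : Matrix ι ι ℂ}
    (hρ : ρ.PosDef) (hX : X.IsHermitian) : g ρ ρ X = X.trace.re := by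
  obtain ⟨U, hU, d, hd, hUρ⟩ := hρ.exists_unitary_conj_eq_diagonal
  have htr : (star U * X * U).trace = X.trace := by
    rw [trace_mul_cycle, mem_unitaryGroup_iff.mp hU, one_mul]
  rw [hg.eq_sum_of_conj_eq_diagonal hU hd hUρ hρ.1 hX, hUρ, ← htr, trace, Complex.re_sum]
  refine Finset.sum_congr rfl fun i _ => ?_
  rw [Finset.sum_eq_single i (fun j _ hj => by simp [diagonal_apply_ne _ hj.symm]) (by simp),
    metricKernel_self hf1 (hd i).ne', diagonal_apply_eq, Complex.re_ofReal_mul, Complex.conj_re,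
    inv_mul_cancel_left₀ (hd i).ne']
  rfl

lemma real_smul_real_smul_real_smul (hg : IsMonotoneMetric f g) {a : ℝ} (ha : 0 < a) (b c : ℝ)
    {ρ X Y : Matrix ι ι ℂ} (hρ : ρ.PosDef) (hX : X.IsHermitian) (hY : Y.IsHermitian) :
    g ((a : ℂ) • ρ) ((b : ℂ) • X) ((c : ℂ) • Y) = b * c / a * g ρ X Y := by
  rw [hg.smul_right, hg.smul_left, hg.real_smul_base ha hρ hX hY]
  ring

end IsMonotoneMetric

theorem stmt_13_general (n : ℕ) (hn : 0 < n)
    (f : ℝ → ℝ) (hf1 : f 1 = 1)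
    (gf : Matrix (Fin n) (Fin n) ℂ → Matrix (Fin n) (Fin n) ℂ →
      Matrix (Fin n) (Fin n) ℂ → ℝ)
    (hunit : ∀ U : Matrix (Fin n) (Fin n) ℂ, U ∈ Matrix.unitaryGroup (Fin n) ℂ →
      ∀ ρ X Y, gf (U * ρ * star U) (U * X * star U) (U * Y * star U) = gf ρ X Y)
    (hsymm : ∀ ρ X Y, gf ρ X Y = gf ρ Y X)
    (haddR : ∀ ρ X Y Y', gf ρ X (Y + Y') = gf ρ X Y + gf ρ X Y')
    (hsmulR : ∀ ρ X Y (r : ℝ), gf ρ X ((r : ℂ) • Y) = r * gf ρ X Y)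
    (hdiag : ∀ d : Fin n → ℝ, (∀ i, 0 < d i) →
      ∀ X : Matrix (Fin n) (Fin n) ℂ, X.IsHermitian →
      gf (Matrix.diagonal (fun i => (d i : ℂ))) X X
        = ∑ i, ∑ j, (1 / (d j * f (d i / d j))) * Complex.normSq (X i j)) :
    -- h : (t, ρ) ↦ t²ρ/4 is a bijection from ℝ_{>0} × 𝔻 onto P(n) ...
    (∀ t s : ℝ, 0 < t → 0 < s →
      ∀ ρ τ : Matrix (Fin n) (Fin n) ℂ, ρ.PosDef → τ.PosDef →
        ρ.trace = 1 → τ.trace = 1 →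
        ((t ^ 2 / 4 : ℂ)) • ρ = ((s ^ 2 / 4 : ℂ)) • τ → t = s ∧ ρ = τ) ∧
    (∀ A : Matrix (Fin n) (Fin n) ℂ, A.PosDef →
      ∃ t : ℝ, 0 < t ∧ ∃ ρ : Matrix (Fin n) (Fin n) ℂ, ρ.PosDef ∧ ρ.trace = 1 ∧
        A = ((t ^ 2 / 4 : ℂ)) • ρ) ∧
    -- ... and the pull-back metric G = h* g^f is the warped product metric
    -- dt² + t² g^f|_{t=1}:
    (∀ t : ℝ, 0 < t → ∀ ρ V W : Matrix (Fin n) (Fin n) ℂ,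
      ρ.PosDef → ρ.trace = 1 →
      V.IsHermitian → V.trace = 0 → W.IsHermitian → W.trace = 0 →
      -- G_{(t,ρ)}(∂_t, ∂_t) = 1
      gf ((t ^ 2 / 4 : ℂ) • ρ) ((t / 2 : ℂ) • ρ) ((t / 2 : ℂ) • ρ) = 1 ∧
      -- G_{(t,ρ)}(∂_t, V) = 0
      gf ((t ^ 2 / 4 : ℂ) • ρ) ((t / 2 : ℂ) • ρ) ((t ^ 2 / 4 : ℂ) • V) = 0 ∧
      -- G_{(t,ρ)}(V, W) = t² G_{(1,ρ)}(V, W)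
      gf ((t ^ 2 / 4 : ℂ) • ρ) ((t ^ 2 / 4 : ℂ) • V) ((t ^ 2 / 4 : ℂ) • W)
        = t ^ 2 * gf ((1 / 4 : ℂ) • ρ) ((1 / 4 : ℂ) • V) ((1 / 4 : ℂ) • W)) := by
  have hg : IsMonotoneMetric f gf := ⟨hunit, hsymm, haddR, hsmulR, hdiag⟩
  have : Nonempty (Fin n) := Fin.pos_iff_nonempty.mp hn
  refine ⟨fun t s ht hs ρ τ _ _ hρ hτ h => eq_and_eq_of_sq_div_four_smul_eq ht hs hρ hτ h,
    fun A hA => hA.exists_eq_sq_div_four_smul, ?_⟩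
  intro t ht ρ V W hρ htr hV hVtr hW _
  have hquarter : (0 : ℝ) < t ^ 2 / 4 := by positivity
  have e1 : (t ^ 2 / 4 : ℂ) = ((t ^ 2 / 4 : ℝ) : ℂ) := by push_cast; ring
  have e2 : (t / 2 : ℂ) = ((t / 2 : ℝ) : ℂ) := by push_cast; ring
  have e3 : (1 / 4 : ℂ) = ((1 / 4 : ℝ) : ℂ) := by push_cast; ring
  simp only [e1, e2, e3, hg.real_smul_real_smul_real_smul hquarter _ _ hρ hρ.1 hρ.1,
    hg.real_smul_real_smul_real_smul hquarter _ _ hρ hρ.1 hV,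
    hg.real_smul_real_smul_real_smul hquarter _ _ hρ hV hW,
    hg.real_smul_real_smul_real_smul (by norm_num : (0 : ℝ) < 1 / 4) _ _ hρ hV hW,
    hg.self_left hf1 hρ hρ.1, hg.self_left hf1 hρ hV, htr, hVtr, Complex.one_re,
    Complex.zero_re]
  exact ⟨by field_simp; ring, by ring, by field_simp⟩

/-- `gf ρ X Y` abstracts the monotone metric `g^f_ρ(X,Y)` on `P(n)` associated
with an operator monotone `f` with `f(1)=1`, `f(t)=t f(1/t)`; we record the
properties given by the contour-integral definition: unitary invariance,
bilinearity/symmetry in the tangent slots, and the diagonal formula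
`g^f_{diag d}(X,X) = Σ_{i,j} c(dᵢ,dⱼ)|X_{ij}|²`, `c(x,y) = 1/(y f(x/y))`.

The map `h(t,ρ) = t²ρ/4` is an isometry of the warped product
`ℝ_{>0} ×_t (𝔻, g^f)` onto `(P(n), g^f)`: `h` is injective, hits every positive
definite matrix, and its differential `dh_{(t,ρ)}(s,V) = (ts/2)ρ + (t²/4)V`
pulls `g^f` back to `dt² + t² g^f|_{(1,·)}`; in particular
`G_{(t,ρ)}(∂_t,∂_t) = 1`, `G_{(t,ρ)}(∂_t, V) = 0`, and
`G_{(t,ρ)}(V,W) = t² G_{(1,ρ)}(V,W)` for vertical `V`, `W` (trace-zero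
Hermitian tangents of `𝔻`). -/
theorem stmt_13 (n : ℕ) (hn : 0 < n)
    (f : ℝ → ℝ) (hf1 : f 1 = 1) (hfsym : ∀ s : ℝ, 0 < s → f s = s * f (1 / s))
    (gf : Matrix (Fin n) (Fin n) ℂ → Matrix (Fin n) (Fin n) ℂ →
      Matrix (Fin n) (Fin n) ℂ → ℝ)
    (hunit : ∀ U : Matrix (Fin n) (Fin n) ℂ, U ∈ Matrix.unitaryGroup (Fin n) ℂ →
      ∀ ρ X Y, gf (U * ρ * star U) (U * X * star U) (U * Y * star U) = gf ρ X Y)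
    (hsymm : ∀ ρ X Y, gf ρ X Y = gf ρ Y X)
    (haddR : ∀ ρ X Y Y', gf ρ X (Y + Y') = gf ρ X Y + gf ρ X Y')
    (hsmulR : ∀ ρ X Y (r : ℝ), gf ρ X ((r : ℂ) • Y) = r * gf ρ X Y)
    (hdiag : ∀ d : Fin n → ℝ, (∀ i, 0 < d i) →
      ∀ X : Matrix (Fin n) (Fin n) ℂ, X.IsHermitian →
      gf (Matrix.diagonal (fun i => (d i : ℂ))) X X
        = ∑ i, ∑ j, (1 / (d j * f (d i / d j))) * Complex.normSq (X i j)) :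
    -- h : (t, ρ) ↦ t²ρ/4 is a bijection from ℝ_{>0} × 𝔻 onto P(n) ...
    (∀ t s : ℝ, 0 < t → 0 < s →
      ∀ ρ τ : Matrix (Fin n) (Fin n) ℂ, ρ.PosDef → τ.PosDef →
        ρ.trace = 1 → τ.trace = 1 →
        ((t ^ 2 / 4 : ℂ)) • ρ = ((s ^ 2 / 4 : ℂ)) • τ → t = s ∧ ρ = τ) ∧
    (∀ A : Matrix (Fin n) (Fin n) ℂ, A.PosDef →
      ∃ t : ℝ, 0 < t ∧ ∃ ρ : Matrix (Fin n) (Fin n) ℂ, ρ.PosDef ∧ ρ.trace = 1 ∧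
        A = ((t ^ 2 / 4 : ℂ)) • ρ) ∧
    -- ... and the pull-back metric G = h* g^f is the warped product metric
    -- dt² + t² g^f|_{t=1}:
    (∀ t : ℝ, 0 < t → ∀ ρ V W : Matrix (Fin n) (Fin n) ℂ,
      ρ.PosDef → ρ.trace = 1 →
      V.IsHermitian → V.trace = 0 → W.IsHermitian → W.trace = 0 →
      -- G_{(t,ρ)}(∂_t, ∂_t) = 1
      gf ((t ^ 2 / 4 : ℂ) • ρ) ((t / 2 : ℂ) • ρ) ((t / 2 : ℂ) • ρ) = 1 ∧
      -- G_{(t,ρ)}(∂_t, V) = 0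
      gf ((t ^ 2 / 4 : ℂ) • ρ) ((t / 2 : ℂ) • ρ) ((t ^ 2 / 4 : ℂ) • V) = 0 ∧
      -- G_{(t,ρ)}(V, W) = t² G_{(1,ρ)}(V, W)
      gf ((t ^ 2 / 4 : ℂ) • ρ) ((t ^ 2 / 4 : ℂ) • V) ((t ^ 2 / 4 : ℂ) • W)
        = t ^ 2 * gf ((1 / 4 : ℂ) • ρ) ((1 / 4 : ℂ) • V) ((1 / 4 : ℂ) • W)) :=
  stmt_13_general n hn f hf1 gf hunit hsymm haddR hsmulR hdiag
end

section
/- Let (L^{n+1}, ds²) be the Takano Gaussian space: L^{n+1} = ℝ_{>0} × ℝⁿ with metric ds² = (2n dσ² + dm₁² + ... + dm_n²)/σ². Then for each α ∈ ℝ, the α-connection given by ∇^{(α)}_{∂_i}∂_j = ((1−α)/(2nσ))δ_{ij}∂_σ, ∇^{(α)}_{∂_i}∂_σ = ∇^{(α)}_{∂_σ}∂_i = −((1+α)/σ)∂_i, ∇^{(α)}_{∂_σ}∂_σ = −((1+2α)/σ)∂_σ makes (L^{n+1}, ds², ∇^{(α)}) a space of constant curvature −(1−α)(1+α)/(2n);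 in particular the curvature tensor vanishes for α = ±1. -/
open scoped BigOperators

/-- Components of the Fisher metric of the Takano Gaussian space
`L^{n+1} = ℝ_{>0} × ℝⁿ` (index `0` is the `σ`-direction):
`G_{σσ} = 2n/σ²`, `G_{ij} = δ_{ij}/σ²`, `G_{σi} = 0`. -/
noncomputable def takanoG (n : ℕ) (i j : Fin (n + 1)) (σ : ℝ) : ℝ :=
  if i = 0 ∧ j = 0 then 2 * n / σ ^ 2 else if i = j then 1 / σ ^ 2 else 0

/-- Christoffel symbols `Γ^k_{ij}` of the `α`-connection of the Takano Gaussian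
space: `∇^{(α)}_{∂_i}∂_j = ((1−α)/(2nσ))δ_{ij}∂_σ`,
`∇^{(α)}_{∂_i}∂_σ = ∇^{(α)}_{∂_σ}∂_i = −((1+α)/σ)∂_i`,
`∇^{(α)}_{∂_σ}∂_σ = −((1+2α)/σ)∂_σ`. -/
noncomputable def takanoΓ (n : ℕ) (α : ℝ) (i j k : Fin (n + 1)) (σ : ℝ) : ℝ :=
  if i = 0 ∧ j = 0 then (if k = 0 then -(1 + 2 * α) / σ else 0)
  else if i = 0 then (if k = j then -(1 + α) / σ else 0)
  else if j = 0 then (if k = i then -(1 + α) / σ else 0)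
  else if i = j ∧ k = 0 then (1 - α) / (2 * n * σ) else 0

/-- The component `R^l_{ijk}` of the curvature tensor
`R(∂_i,∂_j)∂_k = ∂_i Γ^l_{jk} − ∂_j Γ^l_{ik} + Γ^m_{jk}Γ^l_{im} − Γ^m_{ik}Γ^l_{jm}`;
all Christoffel symbols depend only on the coordinate `σ` (index `0`). -/
noncomputable def takanoRiem (n : ℕ) (α : ℝ) (i j k l : Fin (n + 1)) (σ : ℝ) : ℝ :=
  (if i = 0 then deriv (fun s => takanoΓ n α j k l s) σ else 0)
  - (if j = 0 then deriv (fun s => takanoΓ n α i k l s) σ else 0)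
  + ∑ m : Fin (n + 1), takanoΓ n α j k m σ * takanoΓ n α i m l σ
  - ∑ m : Fin (n + 1), takanoΓ n α i k m σ * takanoΓ n α j m l σ

/-!
Every Christoffel symbol is a constant multiple of `σ⁻¹`, so its `σ`-derivative and the
quadratic terms of the curvature are constant multiples of `σ⁻²`, as is the metric: the
identity need only be checked at `σ = 1`. There `∇_{∂_j} ∂_k` is a multiple of a single
coordinate field, which collapses each sum over `m` to one term, and what is left is a
finite check according to which of the indices are the `σ`-index `0`.
-/

namespace Takano

variable {n : ℕ} {α : ℝ}

theorem takanoΓ_eq_inv_mul (i j k : Fin (n + 1)) (σ : ℝ) :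
    takanoΓ n α i j k σ = σ⁻¹ * takanoΓ n α i j k 1 := by
  unfold takanoΓ
  split_ifs <;> ring

theorem takanoG_eq_inv_sq_mul (i j : Fin (n + 1)) (σ : ℝ) :
    takanoG n i j σ = (σ ^ 2)⁻¹ * takanoG n i j 1 := by
  unfold takanoG
  split_ifs <;> ring

theorem deriv_takanoΓ (i j k : Fin (n + 1)) (σ : ℝ) :
    deriv (fun s => takanoΓ n α i j k s) σ = -(σ ^ 2)⁻¹ * takanoΓ n α i j k 1 := by
  conv_lhs =>
    rw [funext (takanoΓ_eq_inv_mul (α := α) i j k), deriv_mul_const_field, deriv_inv]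

/-- The coordinate field of which `∇_{∂_j} ∂_k` is a multiple. -/
def covIndex (j k : Fin (n + 1)) : Fin (n + 1) :=
  if j = 0 then k else if k = 0 then j else 0

theorem takanoΓ_eq_zero_of_ne_covIndex {j k m : Fin (n + 1)} (hm : m ≠ covIndex j k)
    (σ : ℝ) : takanoΓ n α j k m σ = 0 := by
  unfold takanoΓ
  unfold covIndex at hm
  split_ifs at hm ⊢ <;> simp_all

theorem sum_takanoΓ_mul (j k : Fin (n + 1)) (σ : ℝ) (f : Fin (n + 1) → ℝ) :
    ∑ m, takanoΓ n α j k m σ * f m = takanoΓ n α j k (covIndex j k) σ * f (covIndex j k) :=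
  Finset.sum_eq_single_of_mem _ (Finset.mem_univ _) fun m _ hm => by
    rw [takanoΓ_eq_zero_of_ne_covIndex hm, zero_mul]

theorem takanoRiem_eq_inv_sq_mul (i j k l : Fin (n + 1)) (σ : ℝ) :
    takanoRiem n α i j k l σ = (σ ^ 2)⁻¹ * takanoRiem n α i j k l 1 := by
  simp only [takanoRiem, sum_takanoΓ_mul, deriv_takanoΓ]
  simp only [takanoΓ_eq_inv_mul _ _ _ σ]
  split_ifs <;> ring

theorem takanoRiem_self (i k l : Fin (n + 1)) (σ : ℝ) : takanoRiem n α i i k l σ = 0 := by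
  simp [takanoRiem]

theorem takanoRiem_one (i j k l : Fin (n + 1)) :
    takanoRiem n α i j k l 1 = (-(1 - α) * (1 + α) / (2 * n)) *
      (takanoG n j k 1 * (if l = i then 1 else 0)
        - takanoG n i k 1 * (if l = j then 1 else 0)) := by
  obtain rfl | hij := eq_or_ne i j
  · simp [takanoRiem_self]
  -- cancels the `2n` of `G_{σσ}` against the `1 / (2n)` of the curvature constant
  have hn : (n : ℝ) ≠ 0 := by
    rintro h
    obtain rfl : n = 0 := by exact_mod_cast h
    exact hij (Subsingleton.elim (α := Fin 1) i j)
  simp only [takanoRiem, deriv_takanoΓ, sum_takanoΓ_mul]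
  rcases eq_or_ne i 0 with hi | hi <;> rcases eq_or_ne j 0 with hj | hj <;>
    rcases eq_or_ne k 0 with hk | hk <;>
    simp only [covIndex, takanoΓ, takanoG, hi, hj, hk, if_true, if_false, true_and, and_true,
      false_and, and_false, one_pow, div_one, mul_one] <;>
    split_ifs <;> first | (exfalso; grind) | (field_simp; ring)

theorem takanoRiem_eq_constantCurvature (i j k l : Fin (n + 1)) (σ : ℝ) :
    takanoRiem n α i j k l σ = (-(1 - α) * (1 + α) / (2 * n)) *
      (takanoG n j k σ * (if l = i then 1 else 0)
        - takanoG n i k σ * (if l = j then 1 else 0)) := by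
  rw [takanoRiem_eq_inv_sq_mul, takanoRiem_one]
  simp only [takanoG_eq_inv_sq_mul _ _ σ]
  ring

end Takano

theorem stmt_14_general (n : ℕ) (α : ℝ)
    (i j k l : Fin (n + 1)) (σ : ℝ) :
    takanoRiem n α i j k l σ
      = (-(1 - α) * (1 + α) / (2 * n)) *
        (takanoG n j k σ * (if l = i then 1 else 0)
          - takanoG n i k σ * (if l = j then 1 else 0))
    ∧ ((α = 1 ∨ α = -1) → takanoRiem n α i j k l σ = 0) := by
  have hR := Takano.takanoRiem_eq_constantCurvature (α := α) i j k l σ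
  refine ⟨hR, ?_⟩
  rintro (rfl | rfl) <;> simp [hR]

/-- `(L^{n+1}, ds², ∇^{(α)})` is a space of constant curvature
`−(1−α)(1+α)/(2n)`, i.e. `R(X,Y)Z = k{g(Y,Z)X − g(X,Z)Y}` with that `k`;
in particular the curvature vanishes for `α = ±1`. -/
theorem stmt_14 (n : ℕ) (hn : 0 < n) (α : ℝ)
    (i j k l : Fin (n + 1)) (σ : ℝ) (hσ : 0 < σ) :
    takanoRiem n α i j k l σ
      = (-(1 - α) * (1 + α) / (2 * n)) *
        (takanoG n j k σ * (if l = i then 1 else 0)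
          - takanoG n i k σ * (if l = j then 1 else 0))
    ∧ ((α = 1 ∨ α = -1) → takanoRiem n α i j k l σ = 0) :=
  stmt_14_general n α i j k l σ
end
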